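/- arXiv:2306.00130 — 4 statements merged into one kernel-verified Lean document; each statement's English description precedes it below -/
import Mathlib

section
/- Let Λ⁻ and Λ⁺ be probability measures on [0,1] with Λ⁻ ≤ Λ⁺ in the stochastic order (i.e., Λ⁻[x,1] ≤ Λ⁺[x,1] for all x). Then there exists a finite measure Λ on the simplex Δ = {(y,z) ∈ [0,1]² : y + z ≤ 1} such that for all Borel sets A, B ⊆ [0,1]: Λ⁻(A) = Λ{(y,z) : y ∈ A} and Λ⁺(B) = Λ{(y,z) : y + z ∈ B}. -/
open MeasureTheory Set

/-- Quantile function (clamped so that it is globally monotone). -/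
noncomputable def quantF (μ : Measure ℝ) (u : ℝ) : ℝ :=
  sInf ({x | ENNReal.ofReal (min u 1) ≤ μ (Set.Iic x)} ∩ Set.Ici 0)

section QuantLemmas

variable {μ : Measure ℝ} [IsProbabilityMeasure μ]

lemma iic_one_eq_one (hμ : μ (Set.Icc (0:ℝ) 1)ᶜ = 0) : μ (Set.Iic (1:ℝ)) = 1 := by
  rw [← prob_compl_eq_zero_iff measurableSet_Iic]
  refine measure_mono_null ?_ hμ
  intro y hy
  simp only [Set.compl_Iic, Set.mem_Ioi] at hy
  simp only [Set.mem_compl_iff, Set.mem_Icc, not_and_or, not_le]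
  right; exact hy

lemma iic_neg_eq_zero (hμ : μ (Set.Icc (0:ℝ) 1)ᶜ = 0) {x : ℝ} (hx : x < 0) : μ (Set.Iic x) = 0 := by
  refine measure_mono_null ?_ hμ
  intro y hy
  simp only [Set.mem_Iic] at hy
  simp only [Set.mem_compl_iff, Set.mem_Icc, not_and_or, not_le]
  left; exact lt_of_le_of_lt hy hx

lemma quant_set_bddBelow (u : ℝ) :
    BddBelow ({x | ENNReal.ofReal (min u 1) ≤ μ (Set.Iic x)} ∩ Set.Ici 0) :=
  ⟨0, fun _ hx => hx.2⟩

lemma one_mem_quant_set (hμ : μ (Set.Icc (0:ℝ) 1)ᶜ = 0) (u : ℝ) :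
    (1:ℝ) ∈ ({x | ENNReal.ofReal (min u 1) ≤ μ (Set.Iic x)} ∩ Set.Ici 0) := by
  constructor
  · show ENNReal.ofReal (min u 1) ≤ μ (Set.Iic 1)
    rw [iic_one_eq_one hμ]
    calc ENNReal.ofReal (min u 1) ≤ ENNReal.ofReal 1 :=
          ENNReal.ofReal_le_ofReal (min_le_right _ _)
      _ = 1 := by simp
  · exact Set.mem_Ici.mpr zero_le_one

lemma quant_monotone (hμ : μ (Set.Icc (0:ℝ) 1)ᶜ = 0) : Monotone (quantF μ) := by
  intro u v huv
  refine csInf_le_csInf (quant_set_bddBelow u) ⟨1, one_mem_quant_set hμ v⟩ ?_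
  intro x hx
  exact ⟨le_trans (ENNReal.ofReal_le_ofReal (min_le_min_right 1 huv)) hx.1, hx.2⟩

lemma quant_nonneg (hμ : μ (Set.Icc (0:ℝ) 1)ᶜ = 0) (u : ℝ) : 0 ≤ quantF μ u :=
  le_csInf ⟨1, one_mem_quant_set hμ u⟩ (fun _ hx => hx.2)

lemma quant_le_one (hμ : μ (Set.Icc (0:ℝ) 1)ᶜ = 0) (u : ℝ) : quantF μ u ≤ 1 :=
  csInf_le (quant_set_bddBelow u) (one_mem_quant_set hμ u)

lemma quant_le_iff (hμ : μ (Set.Icc (0:ℝ) 1)ᶜ = 0) {u x : ℝ} (hu : u ∈ Set.Ioo (0:ℝ) 1) :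
    quantF μ u ≤ x ↔ ENNReal.ofReal u ≤ μ (Set.Iic x) := by
  have hmin : min u 1 = u := min_eq_left hu.2.le
  constructor
  · intro h
    have key : ∀ n : ℕ, ENNReal.ofReal u ≤ μ (Set.Iic (x + 1/(n+1))) := by
      intro n
      have hlt : quantF μ u < x + 1/(n+1) := by
        have : (0:ℝ) < 1/(n+1) := by positivity
        linarith
      obtain ⟨s, hs, hsx⟩ := exists_lt_of_csInf_lt ⟨1, one_mem_quant_set hμ u⟩ hlt
      calc ENNReal.ofReal u = ENNReal.ofReal (min u 1) := by rw [hmin]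
        _ ≤ μ (Set.Iic s) := hs.1
        _ ≤ μ (Set.Iic (x + 1/(n+1))) := measure_mono (Set.Iic_subset_Iic.2 hsx.le)
    have hint : (⋂ n : ℕ, Set.Iic (x + 1/(n+1))) = Set.Iic x := by
      apply subset_antisymm
      · intro y hy
        simp only [Set.mem_iInter, Set.mem_Iic] at hy ⊢
        by_contra hyx
        push_neg at hyx
        obtain ⟨n, hn⟩ := exists_nat_one_div_lt (sub_pos.2 hyx)
        have := hy n
        linarith
      · intro y hy
        simp only [Set.mem_iInter, Set.mem_Iic] at hy ⊢
        intro n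
        have : (0:ℝ) < 1/(n+1) := by positivity
        linarith
    have := Directed.measure_iInter (μ := μ)
      (s := fun n : ℕ => Set.Iic (x + 1/((n:ℝ)+1)))
      (fun n : ℕ => measurableSet_Iic.nullMeasurableSet)
      (fun m n => by
        have hdiv : ∀ {a b : ℕ}, a ≤ b → (1:ℝ)/(b+1) ≤ 1/(a+1) := by
          intro a b h
          apply one_div_le_one_div_of_le (by positivity)
          exact_mod_cast Nat.succ_le_succ h
        exact ⟨max m n,
          Set.Iic_subset_Iic.2 (by linarith [hdiv (le_max_left m n)]),
          Set.Iic_subset_Iic.2 (by linarith [hdiv (le_max_right m n)])⟩)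
      ⟨0, measure_ne_top μ _⟩
    rw [hint] at this
    rw [this]
    exact le_iInf key
  · intro h
    have hx0 : 0 ≤ x := by
      by_contra hx
      push_neg at hx
      rw [iic_neg_eq_zero hμ hx] at h
      exact absurd h (by simpa using (ENNReal.ofReal_pos.2 hu.1))
    exact csInf_le (quant_set_bddBelow u) ⟨by rw [Set.mem_setOf_eq, hmin]; exact h, hx0⟩

lemma quant_map_eq (hμ : μ (Set.Icc (0:ℝ) 1)ᶜ = 0) :
    Measure.map (quantF μ) (volume.restrict (Set.Ioo (0:ℝ) 1)) = μ := by
  have hmeas : Measurable (quantF μ) := (quant_monotone hμ).measurable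
  symm
  refine Measure.ext_of_Iic μ _ (fun a => ?_)
  rw [Measure.map_apply hmeas measurableSet_Iic,
    Measure.restrict_apply (hmeas measurableSet_Iic)]
  have hne : μ (Set.Iic a) ≠ ⊤ := measure_ne_top μ _
  set t : ℝ := (μ (Set.Iic a)).toReal with ht
  have ht0 : 0 ≤ t := ENNReal.toReal_nonneg
  have ht1 : t ≤ 1 := by
    rw [ht]
    exact ENNReal.toReal_le_of_le_ofReal zero_le_one (by simpa using prob_le_one)
  have hset : quantF μ ⁻¹' Set.Iic a ∩ Set.Ioo 0 1 = Set.Iic t ∩ Set.Ioo 0 1 := by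
    ext u
    simp only [Set.mem_inter_iff, Set.mem_preimage, Set.mem_Iic, and_congr_left_iff]
    intro hu
    rw [quant_le_iff hμ hu, ENNReal.ofReal_le_iff_le_toReal hne]
  rw [hset]
  have hresult : volume (Set.Iic t ∩ Set.Ioo 0 1) = ENNReal.ofReal t := by
    rcases lt_or_eq_of_le ht1 with h1 | h1
    · have : Set.Iic t ∩ Set.Ioo 0 1 = Set.Ioc 0 t := by
        ext u
        simp only [Set.mem_inter_iff, Set.mem_Iic, Set.mem_Ioo, Set.mem_Ioc]
        constructor
        · rintro ⟨h, h2, _⟩; exact ⟨h2, h⟩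
        · rintro ⟨h2, h⟩; exact ⟨h, h2, lt_of_le_of_lt h h1⟩
      rw [this, Real.volume_Ioc, sub_zero]
    · have : Set.Iic t ∩ Set.Ioo 0 1 = Set.Ioo 0 1 := by
        apply Set.inter_eq_self_of_subset_right
        intro u hu
        simp only [Set.mem_Iic]
        rw [← h1] at hu
        exact hu.2.le
      rw [this, Real.volume_Ioo, sub_zero, ← h1]
  rw [hresult, ht, ENNReal.ofReal_toReal hne]

end QuantLemmas

theorem coupling_lemma
    (Λm Λp : Measure ℝ) [IsProbabilityMeasure Λm] [IsProbabilityMeasure Λp]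
    (hm : Λm (Set.Icc (0:ℝ) 1)ᶜ = 0) (hp : Λp (Set.Icc (0:ℝ) 1)ᶜ = 0)
    (hord : ∀ x ∈ Set.Icc (0:ℝ) 1, Λm (Set.Icc x 1) ≤ Λp (Set.Icc x 1)) :
    ∃ Λ : Measure (ℝ × ℝ), IsFiniteMeasure Λ ∧
      Λ {p : ℝ × ℝ | ¬ (0 ≤ p.1 ∧ 0 ≤ p.2 ∧ p.1 + p.2 ≤ 1)} = 0 ∧
      (∀ A : Set ℝ, MeasurableSet A →
        Λm A = Λ {p : ℝ × ℝ | p.1 ∈ A} ∧ Λp A = Λ {p : ℝ × ℝ | p.1 + p.2 ∈ A}) := by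
  -- CDF ordering : Λp (Iic x) ≤ Λm (Iic x)
  have hcdf : ∀ x : ℝ, Λp (Set.Iic x) ≤ Λm (Set.Iic x) := by
    intro x
    rcases lt_or_ge x 0 with hx | hx
    · rw [iic_neg_eq_zero hp hx]; exact zero_le
    · -- first : Λm (Ioi x) ≤ Λp (Ioi x)
      have hIoi : Λm (Set.Ioi x) ≤ Λp (Set.Ioi x) := by
        rcases le_or_gt 1 x with hx1 | hx1
        · have : Λm (Set.Ioi x) = 0 := by
            refine measure_mono_null ?_ hm
            intro y hy
            simp only [Set.mem_Ioi] at hy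
            simp only [Set.mem_compl_iff, Set.mem_Icc, not_and_or, not_le]
            right; exact lt_of_le_of_lt hx1 hy
          rw [this]; exact zero_le
        · -- 0 ≤ x < 1
          have hIoiIoc : ∀ (ν : Measure ℝ), ν (Set.Icc (0:ℝ) 1)ᶜ = 0 →
              ν (Set.Ioi x) = ν (Set.Ioc x 1) := by
            intro ν hν
            apply le_antisymm
            · calc ν (Set.Ioi x) ≤ ν (Set.Ioc x 1 ∪ (Set.Icc 0 1)ᶜ) := by
                    apply measure_mono
                    intro y hy
                    simp only [Set.mem_Ioi] at hy
                    by_cases hy2 : y ∈ Set.Icc (0:ℝ) 1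
                    · left; exact ⟨hy, hy2.2⟩
                    · right; exact hy2
                _ ≤ ν (Set.Ioc x 1) + ν (Set.Icc 0 1)ᶜ := measure_union_le _ _
                _ = ν (Set.Ioc x 1) := by rw [hν, add_zero]
            · exact measure_mono Set.Ioc_subset_Ioi_self
          rw [hIoiIoc Λm hm, hIoiIoc Λp hp]
          -- Ioc x 1 = ⋃ n, Icc (x + (1-x)/(n+1)) 1
          set s : ℕ → Set ℝ := fun n => Set.Icc (x + (1-x)/(n+1)) 1 with hs
          have hmono : Monotone s := by
            intro m n hmn
            apply Set.Icc_subset_Icc_left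
            have hd : (1-x)/((n:ℝ)+1) ≤ (1-x)/((m:ℝ)+1) := by
              apply div_le_div_of_nonneg_left (by linarith) (by positivity)
              exact_mod_cast Nat.succ_le_succ hmn
            linarith
          have hUnion : (⋃ n, s n) = Set.Ioc x 1 := by
            apply subset_antisymm
            · intro y hy
              simp only [Set.mem_iUnion, hs, Set.mem_Icc] at hy
              obtain ⟨n, hn1, hn2⟩ := hy
              refine ⟨?_, hn2⟩
              have : (0:ℝ) < (1-x)/(n+1) := div_pos (by linarith) (by positivity)
              linarith
            · intro y hy
              simp only [Set.mem_Ioc] at hy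
              obtain ⟨n, hn⟩ := exists_nat_one_div_lt
                (div_pos (sub_pos.2 hy.1) (sub_pos.2 hx1))
              simp only [Set.mem_iUnion, hs, Set.mem_Icc]
              refine ⟨n, ?_, hy.2⟩
              have h1x : (0:ℝ) < 1 - x := sub_pos.2 hx1
              have : (1-x)/(n+1) < y - x := by
                calc (1-x)/(n+1) = (1-x) * (1/(n+1)) := by ring
                  _ < (1-x) * ((y-x)/(1-x)) := by
                      exact mul_lt_mul_of_pos_left hn h1x
                  _ = y - x := by field_simp
              linarith
          calc Λm (Set.Ioc x 1) = ⨆ n, Λm (s n) := by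
                rw [← hUnion]; exact hmono.measure_iUnion
            _ ≤ ⨆ n, Λp (s n) := by
                apply iSup_mono
                intro n
                apply hord
                constructor
                · have : (0:ℝ) ≤ (1-x)/(n+1) := div_nonneg (by linarith) (by positivity)
                  linarith
                · have h1x : (0:ℝ) < 1 - x := sub_pos.2 hx1
                  have : (1-x)/(n+1) ≤ 1 - x := by
                    apply div_le_self h1x.le
                    have : (0:ℝ) ≤ n := Nat.cast_nonneg n
                    linarith
                  linarith
            _ = Λp (Set.Ioc x 1) := by rw [← hUnion]; exact hmono.measure_iUnion.symm
      -- now convert to Iic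
      have h1 : Λp (Set.Iic x) = 1 - Λp (Set.Ioi x) := by
        rw [← Set.compl_Ioi, prob_compl_eq_one_sub measurableSet_Ioi]
      have h2 : Λm (Set.Iic x) = 1 - Λm (Set.Ioi x) := by
        rw [← Set.compl_Ioi, prob_compl_eq_one_sub measurableSet_Ioi]
      rw [h1, h2]
      exact tsub_le_tsub_left hIoi 1
  -- quantile functions
  set Qm := quantF Λm with hQm
  set Qp := quantF Λp with hQp
  have hQmmeas : Measurable Qm := (quant_monotone hm).measurable
  have hQpmeas : Measurable Qp := (quant_monotone hp).measurable
  have hQle : ∀ u ∈ Set.Ioo (0:ℝ) 1, Qm u ≤ Qp u := by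
    intro u hu
    rw [hQm, quant_le_iff hm hu]
    calc ENNReal.ofReal u ≤ Λp (Set.Iic (Qp u)) := by
          rw [← quant_le_iff hp hu]
      _ ≤ Λm (Set.Iic (Qp u)) := hcdf _
  set ν : Measure ℝ := volume.restrict (Set.Ioo (0:ℝ) 1) with hν
  set g : ℝ → ℝ × ℝ := fun u => (Qm u, Qp u - Qm u) with hg
  have hgmeas : Measurable g := hQmmeas.prodMk (hQpmeas.sub hQmmeas)
  refine ⟨Measure.map g ν, ?_, ?_, ?_⟩
  · constructor
    rw [Measure.map_apply hgmeas MeasurableSet.univ, Set.preimage_univ, hν,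
      Measure.restrict_apply MeasurableSet.univ, Set.univ_inter, Real.volume_Ioo]
    norm_num
  · have hbadmeas : MeasurableSet {p : ℝ × ℝ | ¬ (0 ≤ p.1 ∧ 0 ≤ p.2 ∧ p.1 + p.2 ≤ 1)} := by
      apply MeasurableSet.compl (s := {p : ℝ × ℝ | 0 ≤ p.1 ∧ 0 ≤ p.2 ∧ p.1 + p.2 ≤ 1})
      exact (measurableSet_le measurable_const measurable_fst).inter
        ((measurableSet_le measurable_const measurable_snd).inter
          (measurableSet_le (measurable_fst.add measurable_snd) measurable_const))
    rw [Measure.map_apply hgmeas hbadmeas, hν,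
      Measure.restrict_apply (hgmeas hbadmeas)]
    convert measure_empty (μ := volume)
    ext u
    simp only [Set.mem_inter_iff, Set.mem_preimage, Set.mem_setOf_eq, Set.mem_empty_iff_false,
      iff_false, not_and]
    intro hbad hu
    exact absurd (show Qm u + (Qp u - Qm u) ≤ 1 by
        rw [add_sub_cancel]; exact quant_le_one hp u)
      (hbad (quant_nonneg hm u) (sub_nonneg.2 (hQle u hu)))
  · intro A hA
    constructor
    · have : {p : ℝ × ℝ | p.1 ∈ A} = Prod.fst ⁻¹' A := rfl
      rw [this, Measure.map_apply hgmeas (measurable_fst hA)]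
      have : g ⁻¹' (Prod.fst ⁻¹' A) = Qm ⁻¹' A := rfl
      rw [this, ← Measure.map_apply hQmmeas hA, hQm, quant_map_eq hm]
    · have hset : {p : ℝ × ℝ | p.1 + p.2 ∈ A} = (fun p : ℝ × ℝ => p.1 + p.2) ⁻¹' A := rfl
      rw [hset, Measure.map_apply hgmeas (s := (fun p : ℝ × ℝ => p.1 + p.2) ⁻¹' A) ((measurable_fst.add measurable_snd) hA)]
      have : g ⁻¹' ((fun p : ℝ × ℝ => p.1 + p.2) ⁻¹' A) = Qp ⁻¹' A := by
        ext u
        simp [hg, add_sub_cancel]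
      rw [this, ← Measure.map_apply hQpmeas hA, hQp, quant_map_eq hp]
end

section
/- For all x ∈ [0,1], y,z ≥ 0 with y + z ≤ 1, and n ∈ ℕ, the algebraic identity holds: x(x + y(1−x))ⁿ + (1−x)(x − (y+z)x)ⁿ − xⁿ = Σ_{k=2}^{n} C(n,k) yᵏ (1−y)^{n−k} (x^{n−k+1} − xⁿ) + (x^{n+1} − xⁿ)[(1−y)ⁿ − (1−y−z)ⁿ]. -/
theorem duality_algebraic_identity
    (x y z : ℝ) (hx : x ∈ Set.Icc (0:ℝ) 1) (hy : 0 ≤ y) (hz : 0 ≤ z)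
    (hyz : y + z ≤ 1) (n : ℕ) :
    x * (x + y * (1 - x))^n + (1 - x) * (x - (y + z) * x)^n - x^n
      = (∑ k ∈ Finset.Icc 2 n,
          (n.choose k : ℝ) * y^k * (1 - y)^(n - k) * (x^(n - k + 1) - x^n))
        + (x^(n + 1) - x^n) * ((1 - y)^n - (1 - y - z)^n) := by
  rcases Nat.eq_zero_or_pos n with h0 | h1
  · subst h0; simp
  set g : ℕ → ℝ := fun k => (n.choose k : ℝ) * y^k * (1 - y)^(n - k) * (x^(n - k + 1) - x^n)
    with hg
  have hset : Finset.range (n+1) = insert 0 (insert 1 (Finset.Icc 2 n)) := by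
    ext k
    simp only [Finset.mem_range, Finset.mem_insert, Finset.mem_Icc, Nat.lt_succ_iff]
    omega
  have h01 : (0:ℕ) ∉ insert 1 (Finset.Icc 2 n) := by simp
  have h12 : (1:ℕ) ∉ Finset.Icc 2 n := by simp
  have hsum : ∑ k ∈ Finset.range (n+1), g k
      = g 0 + (g 1 + ∑ k ∈ Finset.Icc 2 n, g k) := by
    rw [hset, Finset.sum_insert h01, Finset.sum_insert h12]
  have hg1 : g 1 = 0 := by
    simp only [hg]
    have : n - 1 + 1 = n := Nat.succ_pred_eq_of_pos h1
    rw [this]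
    ring
  have hg0 : g 0 = (1 - y)^n * (x^(n+1) - x^n) := by
    simp [hg]
  have hA : ∑ k ∈ Finset.range (n+1), g k = x * (x + y * (1 - x))^n - x^n := by
    have e1 : (x + y * (1 - x))^n
        = ∑ k ∈ Finset.range (n+1), y^k * ((1-y)*x)^(n-k) * (n.choose k : ℝ) := by
      rw [show x + y * (1 - x) = y + (1-y)*x from by ring, add_pow]
    have e2 : (1:ℝ) = ∑ k ∈ Finset.range (n+1), y^k * (1-y)^(n-k) * (n.choose k : ℝ) := by
      have := add_pow y (1-y) n
      simp only [add_sub_cancel, one_pow] at this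
      exact this
    have e3 : ∀ k ∈ Finset.range (n+1),
        g k = x * (y^k * ((1-y)*x)^(n-k) * (n.choose k : ℝ))
              - x^n * (y^k * (1-y)^(n-k) * (n.choose k : ℝ)) := by
      intro k hk
      simp only [hg, mul_pow, pow_succ]
      ring
    rw [Finset.sum_congr rfl e3, Finset.sum_sub_distrib, ← Finset.mul_sum, ← Finset.mul_sum,
      ← e1, ← e2, mul_one]
  have hC : (x - (y + z) * x)^n = (1 - y - z)^n * x^n := by
    rw [← mul_pow]; ring_nf
  have hIcc : ∑ k ∈ Finset.Icc 2 n, g k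
      = x * (x + y * (1 - x))^n - x^n - (1 - y)^n * (x^(n+1) - x^n) := by
    have := hsum
    rw [hg1, hg0, hA] at this
    linarith
  rw [hIcc, hC, pow_succ]
  ring
end

section
/- With g(x,y,z,u) = y(1−x)·1_{u<x} − (y+z)x·1_{u≥x}, for all x₁, x₂ ∈ [0,1] and any measure Λ on Δ with ∫(y²+z) dΛ < ∞: ∫_Δ ∫₀¹ |g(x₁,y,z,u) − g(x₂,y,z,u)|² du Λ(dy,dz) ≤ 6·|x₂ − x₁|·∫_Δ (y² + z) Λ(dy,dz). -/
open MeasureTheory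

lemma sde_cauchy_aux (y z s t : ℝ) (hy : 0 ≤ y) (hz : 0 ≤ z) (hyz : y + z ≤ 1)
    (hs : 0 ≤ s) (ht : 0 ≤ t) (hst : s + t ≤ 1) :
    ((y + z) * s + y * t) ^ 2 ≤ 3 * (y ^ 2 + z) := by
  have hz1 : z ≤ 1 := by linarith
  have c1 : ((y + z) * s + y * t) ^ 2 ≤ (s + t) * ((y + z) ^ 2 * s + y ^ 2 * t) := by
    nlinarith [mul_nonneg (mul_nonneg hs ht) (sq_nonneg z)]
  have hpos : 0 ≤ (y + z) ^ 2 * s + y ^ 2 * t :=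
    add_nonneg (mul_nonneg (sq_nonneg _) hs) (mul_nonneg (sq_nonneg _) ht)
  have c2 : (s + t) * ((y + z) ^ 2 * s + y ^ 2 * t) ≤ (y + z) ^ 2 * s + y ^ 2 * t := by
    nlinarith [mul_nonneg (sub_nonneg.mpr hst) hpos]
  have c3 : (y + z) ^ 2 * s + y ^ 2 * t ≤ (y + z) ^ 2 + y ^ 2 := by
    nlinarith [mul_nonneg (sq_nonneg (y + z)) (sub_nonneg.mpr (by linarith : s ≤ 1)),
      mul_nonneg (sq_nonneg y) (sub_nonneg.mpr (by linarith : t ≤ 1))]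
  have c4 : (y + z) ^ 2 + y ^ 2 ≤ 3 * (y ^ 2 + z) := by
    nlinarith [sq_nonneg (y - z), mul_nonneg hz (sub_nonneg.mpr hz1)]
  linarith

lemma sde_inner_est (x₁ x₂ : ℝ) (hx₁ : x₁ ∈ Set.Icc (0:ℝ) 1) (hx₂ : x₂ ∈ Set.Icc (0:ℝ) 1)
    (y z : ℝ) (hy : 0 ≤ y) (hz : 0 ≤ z) (hyz : y + z ≤ 1)
    (g : ℝ → ℝ → ℝ → ℝ → ℝ)
    (hg : ∀ x y z u, g x y z u = (if u < x then y * (1 - x) else 0)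
      - (if x ≤ u then (y + z) * x else 0)) :
    ∫⁻ u in Set.Icc (0:ℝ) 1, ENNReal.ofReal ((g x₁ y z u - g x₂ y z u)^2)
      ≤ ENNReal.ofReal (6 * |x₂ - x₁|) * ENNReal.ofReal (y^2 + z) := by
  obtain ⟨hx₁0, hx₁1⟩ := hx₁
  obtain ⟨hx₂0, hx₂1⟩ := hx₂
  set m := min x₁ x₂ with hm
  set M := max x₁ x₂ with hM
  have hmM : m ≤ M := min_le_max
  have hm0 : 0 ≤ m := le_min hx₁0 hx₂0
  have hM1 : M ≤ 1 := max_le hx₁1 hx₂1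
  set δ := M - m with hδ
  have habs : |x₂ - x₁| = δ := by
    rw [abs_sub_comm, ← max_sub_min_eq_abs, hδ, hM, hm, max_comm, min_comm]
  have hδ0 : 0 ≤ δ := sub_nonneg.mpr hmM
  have hδ1 : δ ≤ 1 := by simp only [hδ]; linarith
  have hz1 : z ≤ 1 := by linarith
  have hyz2 : 0 ≤ y ^ 2 + z := by positivity
  have hsq : (x₂ - x₁) ^ 2 = δ ^ 2 := by rw [← sq_abs (x₂ - x₁), habs]
  have key : ∀ u : ℝ, ENNReal.ofReal ((g x₁ y z u - g x₂ y z u)^2)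
      ≤ ENNReal.ofReal (2 * (y^2 + z) * δ)
        + (Set.Ico m M).indicator (fun _ => ENNReal.ofReal (3 * (y^2 + z))) u := by
    intro u
    rw [hg, hg]
    rcases lt_or_ge u m with h1 | h1
    · have l1 : u < x₁ := h1.trans_le (min_le_left _ _)
      have l2 : u < x₂ := h1.trans_le (min_le_right _ _)
      rw [if_pos l1, if_pos l2, if_neg (not_le.mpr l1), if_neg (not_le.mpr l2)]
      rw [Set.indicator_of_notMem (fun h => absurd h.1 (not_le.mpr h1)), add_zero]
      refine ENNReal.ofReal_le_ofReal ?_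
      have h2 : (y * (1 - x₁) - 0 - (y * (1 - x₂) - 0)) ^ 2 = y ^ 2 * (x₂ - x₁) ^ 2 := by ring
      rw [h2, hsq]
      nlinarith [mul_nonneg (sq_nonneg y) (mul_nonneg hδ0 (sub_nonneg.mpr hδ1)),
        mul_nonneg (sq_nonneg y) hδ0, mul_nonneg hz hδ0]
    · rcases lt_or_ge u M with h2 | h2
      · have hin : u ∈ Set.Ico m M := ⟨h1, h2⟩
        rw [Set.indicator_of_mem hin]
        refine le_trans ?_ (self_le_add_left _ _)
        refine ENNReal.ofReal_le_ofReal ?_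
        rcases le_total x₁ x₂ with hc | hc
        · have l1 : x₁ ≤ u := (min_eq_left hc) ▸ h1
          have l2 : u < x₂ := (max_eq_right hc) ▸ h2
          rw [if_neg (not_lt.mpr l1), if_pos l2, if_pos l1, if_neg (not_le.mpr l2)]
          have heq : (0 - (y + z) * x₁ - (y * (1 - x₂) - 0)) ^ 2
              = ((y + z) * x₁ + y * (1 - x₂)) ^ 2 := by ring
          rw [heq]
          exact sde_cauchy_aux y z x₁ (1 - x₂) hy hz hyz hx₁0 (by linarith) (by linarith)
        · have l1 : x₂ ≤ u := (min_eq_right hc) ▸ h1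
          have l2 : u < x₁ := (max_eq_left hc) ▸ h2
          rw [if_pos l2, if_neg (not_lt.mpr l1), if_neg (not_le.mpr l2), if_pos l1]
          have heq : (y * (1 - x₁) - 0 - (0 - (y + z) * x₂)) ^ 2
              = ((y + z) * x₂ + y * (1 - x₁)) ^ 2 := by ring
          rw [heq]
          exact sde_cauchy_aux y z x₂ (1 - x₁) hy hz hyz hx₂0 (by linarith) (by linarith)
      · have l1 : x₁ ≤ u := le_trans (le_max_left _ _) h2
        have l2 : x₂ ≤ u := le_trans (le_max_right _ _) h2
        rw [if_neg (not_lt.mpr l1), if_neg (not_lt.mpr l2), if_pos l1, if_pos l2]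
        rw [Set.indicator_of_notMem (fun h => absurd h.2 (not_lt.mpr h2)), add_zero]
        refine ENNReal.ofReal_le_ofReal ?_
        have h3 : (0 - (y + z) * x₁ - (0 - (y + z) * x₂)) ^ 2
            = (y + z) ^ 2 * (x₂ - x₁) ^ 2 := by ring
        rw [h3, hsq]
        have h5 : (y + z) ^ 2 ≤ 2 * (y ^ 2 + z) := by
          nlinarith [sq_nonneg (y - z), mul_nonneg hz (sub_nonneg.mpr hz1)]
        have A : (y + z) ^ 2 * δ ^ 2 ≤ 2 * (y ^ 2 + z) * δ ^ 2 :=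
          mul_le_mul_of_nonneg_right h5 (sq_nonneg δ)
        have B : 2 * (y ^ 2 + z) * δ ^ 2 ≤ 2 * (y ^ 2 + z) * δ := by
          nlinarith [mul_nonneg hyz2 (mul_nonneg hδ0 (sub_nonneg.mpr hδ1))]
        linarith
  calc ∫⁻ u in Set.Icc (0:ℝ) 1, ENNReal.ofReal ((g x₁ y z u - g x₂ y z u)^2)
      ≤ ∫⁻ u in Set.Icc (0:ℝ) 1, (ENNReal.ofReal (2 * (y^2 + z) * δ)
          + (Set.Ico m M).indicator (fun _ => ENNReal.ofReal (3 * (y^2 + z))) u) :=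
        lintegral_mono fun u => key u
    _ = ENNReal.ofReal (2 * (y^2 + z) * δ) * volume (Set.Icc (0:ℝ) 1)
        + ENNReal.ofReal (3 * (y^2 + z)) * volume (Set.Ico m M ∩ Set.Icc (0:ℝ) 1) := by
        rw [lintegral_add_left measurable_const, setLIntegral_const,
          lintegral_indicator measurableSet_Ico, setLIntegral_const,
          Measure.restrict_apply measurableSet_Ico]
    _ ≤ ENNReal.ofReal (2 * (y^2 + z) * δ) * 1
        + ENNReal.ofReal (3 * (y^2 + z)) * ENNReal.ofReal δ := by
        gcongr
        · rw [Real.volume_Icc]; simp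
        · refine le_trans (measure_mono Set.inter_subset_left) ?_
          rw [Real.volume_Ico]
    _ = ENNReal.ofReal (2 * (y^2 + z) * δ + 3 * (y^2 + z) * δ) := by
        rw [mul_one, ← ENNReal.ofReal_mul (by positivity),
          ← ENNReal.ofReal_add (by positivity) (by positivity)]
    _ ≤ ENNReal.ofReal (6 * |x₂ - x₁|) * ENNReal.ofReal (y^2 + z) := by
        rw [← ENNReal.ofReal_mul (by positivity), habs]
        refine ENNReal.ofReal_le_ofReal ?_
        nlinarith [mul_nonneg hδ0 hyz2]

theorem sde_continuity_estimate
    (Λ : Measure (ℝ × ℝ))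
    (hΔ : Λ {p : ℝ × ℝ | ¬ (0 ≤ p.1 ∧ 0 ≤ p.2 ∧ p.1 + p.2 ≤ 1)} = 0)
    (hfin : ∫⁻ p, ENNReal.ofReal (p.1^2 + p.2) ∂Λ < ⊤)
    (x₁ x₂ : ℝ) (hx₁ : x₁ ∈ Set.Icc (0:ℝ) 1) (hx₂ : x₂ ∈ Set.Icc (0:ℝ) 1)
    (g : ℝ → ℝ → ℝ → ℝ → ℝ)
    (hg : ∀ x y z u, g x y z u = (if u < x then y * (1 - x) else 0)
      - (if x ≤ u then (y + z) * x else 0)) :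
    ∫⁻ p, (∫⁻ u in Set.Icc (0:ℝ) 1,
        ENNReal.ofReal ((g x₁ p.1 p.2 u - g x₂ p.1 p.2 u)^2)) ∂Λ
      ≤ ENNReal.ofReal (6 * |x₂ - x₁|) * ∫⁻ p, ENNReal.ofReal (p.1^2 + p.2) ∂Λ := by
  have hae : ∀ᵐ p ∂Λ, (0 ≤ p.1 ∧ 0 ≤ p.2 ∧ p.1 + p.2 ≤ 1) := ae_iff.mpr hΔ
  calc ∫⁻ p, (∫⁻ u in Set.Icc (0:ℝ) 1,
        ENNReal.ofReal ((g x₁ p.1 p.2 u - g x₂ p.1 p.2 u)^2)) ∂Λ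
      ≤ ∫⁻ p, ENNReal.ofReal (6 * |x₂ - x₁|) * ENNReal.ofReal (p.1^2 + p.2) ∂Λ := by
        refine lintegral_mono_ae (hae.mono fun p hp => ?_)
        exact sde_inner_est x₁ x₂ hx₁ hx₂ p.1 p.2 hp.1 hp.2.1 hp.2.2 g hg
    _ = ENNReal.ofReal (6 * |x₂ - x₁|) * ∫⁻ p, ENNReal.ofReal (p.1^2 + p.2) ∂Λ :=
        lintegral_const_mul' _ _ ENNReal.ofReal_ne_top
end

section
/- Fix n ∈ ℕ. For x ∈ [0,1] and N ≥ n, |∏_{i=1}^{n}(⌊Nx⌋ + 1 − i)/(N + 1 − i) − xⁿ| ≤ K/N for a constant K depending only on n; i.e., the sampling duality function S₀(x,n) converges to the moment duality function xⁿ at rate O(1/N) uniformly in x. -/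
private lemma abs_prod_sub_prod_le_aux (s : Finset ℕ) (f g : ℕ → ℝ)
    (hf : ∀ i ∈ s, |f i| ≤ 1) (hg : ∀ i ∈ s, |g i| ≤ 1) :
    |∏ i ∈ s, f i - ∏ i ∈ s, g i| ≤ ∑ i ∈ s, |f i - g i| := by
  induction s using Finset.cons_induction with
  | empty => simp
  | cons a s ha ih =>
    simp only [Finset.prod_cons, Finset.sum_cons]
    have hPQ := ih (fun i hi => hf i (Finset.mem_cons_of_mem hi))
      (fun i hi => hg i (Finset.mem_cons_of_mem hi))
    have hfa := hf a (Finset.mem_cons_self a s)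
    have hga := hg a (Finset.mem_cons_self a s)
    have hQ : |∏ i ∈ s, g i| ≤ 1 := by
      rw [Finset.abs_prod]
      exact Finset.prod_le_one (fun i _ => abs_nonneg _)
        (fun i hi => hg i (Finset.mem_cons_of_mem hi))
    calc |f a * ∏ i ∈ s, f i - g a * ∏ i ∈ s, g i|
        = |f a * (∏ i ∈ s, f i - ∏ i ∈ s, g i) + (f a - g a) * ∏ i ∈ s, g i| := by
          ring_nf
      _ ≤ |f a| * |∏ i ∈ s, f i - ∏ i ∈ s, g i| + |f a - g a| * |∏ i ∈ s, g i| := by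
          refine (abs_add_le _ _).trans ?_
          rw [abs_mul, abs_mul]
      _ ≤ 1 * (∑ i ∈ s, |f i - g i|) + |f a - g a| * 1 := by
          gcongr
      _ = |f a - g a| + ∑ i ∈ s, |f i - g i| := by ring

theorem sampling_function_convergence_rate (n : ℕ) :
    ∃ K : ℝ, ∀ N : ℕ, n ≤ N → 0 < N → ∀ x ∈ Set.Icc (0:ℝ) 1,
      |(∏ i ∈ Finset.Icc 1 n,
          ((⌊(N : ℝ) * x⌋ : ℝ) + 1 - (i : ℝ)) / ((N : ℝ) + 1 - (i : ℝ))) - x^n|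
        ≤ K / N := by
  refine ⟨2 * n * ((n : ℝ)^n + 1) + 2 * (n : ℝ)^2, ?_⟩
  intro N hnN hN x hx
  obtain ⟨hx0, hx1⟩ := hx
  have hNpos : (0:ℝ) < N := by exact_mod_cast hN
  have hnN' : (n : ℝ) ≤ N := by exact_mod_cast hnN
  set F : ℝ := (⌊(N : ℝ) * x⌋ : ℝ) with hF
  have hF0 : 0 ≤ F := by
    have : (0:ℤ) ≤ ⌊(N : ℝ) * x⌋ := Int.floor_nonneg.2 (by positivity)
    rw [hF]; exact_mod_cast this
  have hFle : F ≤ (N : ℝ) * x := Int.floor_le _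
  have hFgt : (N : ℝ) * x - 1 < F := Int.sub_one_lt_floor _
  have hFN : F ≤ (N : ℝ) := hFle.trans (by nlinarith)
  -- basic facts on denominators
  have hden : ∀ i ∈ Finset.Icc 1 n, (0:ℝ) < (N : ℝ) + 1 - (i : ℝ) := by
    intro i hi
    rw [Finset.mem_Icc] at hi
    have : (i : ℝ) ≤ n := by exact_mod_cast hi.2
    linarith
  by_cases h2n : 2 * n ≤ N
  · -- good case
    have h2n' : 2 * (n : ℝ) ≤ N := by exact_mod_cast h2n
    have hxn : x ^ n = ∏ _i ∈ Finset.Icc 1 n, x := by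
      rw [Finset.prod_const, Nat.card_Icc, Nat.add_sub_cancel]
    rw [hxn]
    have key : |(∏ i ∈ Finset.Icc 1 n, (F + 1 - (i : ℝ)) / ((N : ℝ) + 1 - (i : ℝ)))
        - ∏ _i ∈ Finset.Icc 1 n, x|
        ≤ ∑ i ∈ Finset.Icc 1 n, |(F + 1 - (i : ℝ)) / ((N : ℝ) + 1 - (i : ℝ)) - x| := by
      apply abs_prod_sub_prod_le_aux
      · intro i hi
        have hd := hden i hi
        rw [Finset.mem_Icc] at hi
        have hi1 : (1:ℝ) ≤ i := by exact_mod_cast hi.1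
        have hin : (i : ℝ) ≤ n := by exact_mod_cast hi.2
        rw [abs_div, abs_of_pos hd, div_le_one hd, abs_le]
        constructor
        · linarith
        · linarith
      · intro i _
        rw [abs_le]; constructor <;> linarith
    refine key.trans ?_
    have hsum : ∑ i ∈ Finset.Icc 1 n, |(F + 1 - (i : ℝ)) / ((N : ℝ) + 1 - (i : ℝ)) - x|
        ≤ ∑ _i ∈ Finset.Icc 1 n, 2 * (n : ℝ) / N := by
      apply Finset.sum_le_sum
      intro i hi
      have hd := hden i hi
      rw [Finset.mem_Icc] at hi
      have hi1 : (1:ℝ) ≤ i := by exact_mod_cast hi.1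
      have hin : (i : ℝ) ≤ n := by exact_mod_cast hi.2
      have heq : (F + 1 - (i : ℝ)) / ((N : ℝ) + 1 - (i : ℝ)) - x
          = (F + 1 - (i : ℝ) - x * ((N : ℝ) + 1 - (i : ℝ))) / ((N : ℝ) + 1 - (i : ℝ)) := by
        field_simp
      rw [heq, abs_div, abs_of_pos hd, div_le_div_iff₀ hd hNpos]
      have hnum : |F + 1 - (i : ℝ) - x * ((N : ℝ) + 1 - (i : ℝ))| ≤ n := by
        rw [abs_le]
        constructor <;> nlinarith
      have hd2 : (N : ℝ) / 2 ≤ (N : ℝ) + 1 - (i : ℝ) := by linarith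
      nlinarith [abs_nonneg (F + 1 - (i : ℝ) - x * ((N : ℝ) + 1 - (i : ℝ)))]
    refine hsum.trans ?_
    rw [Finset.sum_const, Nat.card_Icc]
    simp only [Nat.add_sub_cancel, nsmul_eq_mul]
    have h1 : (n:ℝ) * (2 * n / N) = 2 * (n:ℝ)^2 / N := by
      field_simp
    rw [h1, div_le_div_iff₀ hNpos hNpos]
    have hpos : (0:ℝ) ≤ 2 * (n:ℝ) * ((n:ℝ)^n + 1) * N := by positivity
    nlinarith
  · -- N < 2n, crude bound
    push_neg at h2n
    have h2n' : (N : ℝ) < 2 * n := by exact_mod_cast h2n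
    have hn1 : 1 ≤ n := by
      omega
    have hn1' : (1:ℝ) ≤ n := by exact_mod_cast hn1
    have hprod : |∏ i ∈ Finset.Icc 1 n, (F + 1 - (i : ℝ)) / ((N : ℝ) + 1 - (i : ℝ))|
        ≤ (n : ℝ)^n := by
      rw [Finset.abs_prod]
      have : ((n:ℝ)^n) = ∏ _i ∈ Finset.Icc 1 n, (n : ℝ) := by
        rw [Finset.prod_const, Nat.card_Icc, Nat.add_sub_cancel]
      rw [this]
      apply Finset.prod_le_prod (fun i _ => abs_nonneg _)
      intro i hi
      have hd := hden i hi
      rw [Finset.mem_Icc] at hi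
      have hi1 : (1:ℝ) ≤ i := by exact_mod_cast hi.1
      have hin : (i : ℝ) ≤ n := by exact_mod_cast hi.2
      rw [abs_div, abs_of_pos hd, div_le_iff₀ hd, abs_le]
      have hd1 : (1:ℝ) ≤ (N : ℝ) + 1 - (i : ℝ) := by linarith
      constructor <;> nlinarith
    have hxpow : |x ^ n| ≤ 1 := by
      rw [abs_of_nonneg (by positivity)]
      exact pow_le_one₀ hx0 hx1
    have : |(∏ i ∈ Finset.Icc 1 n, (F + 1 - (i : ℝ)) / ((N : ℝ) + 1 - (i : ℝ))) - x^n|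
        ≤ (n : ℝ)^n + 1 := by
      calc _ ≤ |∏ i ∈ Finset.Icc 1 n, (F + 1 - (i : ℝ)) / ((N : ℝ) + 1 - (i : ℝ))| + |x^n| :=
              abs_sub _ _
        _ ≤ (n : ℝ)^n + 1 := add_le_add hprod hxpow
    refine this.trans ?_
    rw [le_div_iff₀ hNpos]
    have hpos : (0:ℝ) ≤ (n:ℝ)^n + 1 := by positivity
    have h3 : ((n:ℝ)^n + 1) * N ≤ ((n:ℝ)^n + 1) * (2 * n) :=
      mul_le_mul_of_nonneg_left h2n'.le hpos
    have h4 : (0:ℝ) ≤ 2 * (n:ℝ)^2 := by positivity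
    linarith
end
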